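/- arXiv:0708.3301 — 3 statements merged into one kernel-verified Lean document; each statement's English description precedes it below -/
import Mathlib

section
/- For every integer j ≥ 0 and integer n ≥ 1, the imaginary part of ∫₀^π exp(j·e^{iθ}) · sin(nθ) dθ equals (jⁿ/n!)·(π/2). -/
/-! Expanding the exponential gives `Im exp (x e^{iθ}) = ∑ₖ xᵏ/k! sin (kθ)`. The series is dominated
by `∑ₖ |x|ᵏ/k!`, so it may be integrated termwise against `sin (nθ)` on `[0, π]`, and orthogonality
of the sines there leaves only the term `k = n`. -/

open Real

open scoped Nat

theorem integral_cos_int_mul_eq_zero {m : ℤ} (hm : m ≠ 0) : ∫ θ in (0:ℝ)..π, cos (m * θ) = 0 := by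
  rw [intervalIntegral.integral_comp_mul_left (fun θ => cos θ) (Int.cast_ne_zero.mpr hm),
    integral_cos, sin_int_mul_pi]
  simp

theorem integral_sin_nat_mul_mul_sin_nat_mul (k : ℕ) {n : ℕ} (hn : n ≠ 0) :
    ∫ θ in (0:ℝ)..π, sin (k * θ) * sin (n * θ) = if k = n then π / 2 else 0 := by
  have product_to_sum : ∀ θ : ℝ, sin (k * θ) * sin (n * θ) =
      (cos (((k - n : ℤ) : ℝ) * θ) - cos (((k + n : ℤ) : ℝ) * θ)) / 2 := by
    intro θ
    push_cast
    rw [cos_sub_cos]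
    ring_nf
    rw [sin_neg]
    ring
  have hcos (m : ℤ) : IntervalIntegrable (fun θ => cos (m * θ)) MeasureTheory.volume 0 π :=
    (by fun_prop : Continuous fun θ : ℝ => cos (m * θ)).intervalIntegrable 0 π
  simp_rw [product_to_sum]
  rw [intervalIntegral.integral_div, intervalIntegral.integral_sub (hcos _) (hcos _),
    integral_cos_int_mul_eq_zero (by omega : (k + n : ℤ) ≠ 0)]
  split_ifs with hkn
  · simp [hkn]
  · rw [integral_cos_int_mul_eq_zero (by omega)]
    simp

open Complex

theorem hasSum_im_exp_mul_exp_mul_I (x θ : ℝ) :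
    HasSum (fun k : ℕ => x ^ k / k ! * Real.sin (k * θ)) (exp (x * exp (θ * I))).im := by
  convert Complex.hasSum_im (NormedSpace.expSeries_div_hasSum_exp (x * exp (θ * I))) using 1
  · ext k
    have hexp : exp (θ * I) ^ k = exp ((k * θ : ℝ) * I) := by
      rw [← Complex.exp_nat_mul]
      push_cast
      ring_nf
    rw [mul_pow, hexp, mul_div_right_comm, ← ofReal_pow, ← ofReal_natCast, ← ofReal_div,
      im_ofReal_mul, exp_ofReal_mul_I_im]
  · rw [Complex.exp_eq_exp_ℂ]

theorem norm_mul_sin_mul_sin_le (c a b : ℝ) : ‖c * Real.sin a * Real.sin b‖ ≤ |c| := by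
  rw [norm_mul, norm_mul, Real.norm_eq_abs]
  calc |c| * ‖Real.sin a‖ * ‖Real.sin b‖ ≤ |c| * 1 * 1 := by
        gcongr <;> exact Real.norm_eq_abs _ ▸ abs_sin_le_one _
    _ = |c| := by ring

theorem hasSum_integral_im_exp_mul_exp_mul_I_mul_sin (x : ℝ) (n : ℕ) :
    HasSum (fun k : ℕ => ∫ θ in (0:ℝ)..π, x ^ k / k ! * Real.sin (k * θ) * Real.sin (n * θ))
      (∫ θ in (0:ℝ)..π, (exp (x * exp (θ * I))).im * Real.sin (n * θ)) := by
  refine intervalIntegral.hasSum_integral_of_dominated_convergence (fun k _ => |x| ^ k / k !)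
    (fun k => (by fun_prop : Continuous _).aestronglyMeasurable)
    (fun k => MeasureTheory.ae_of_all _ fun θ _ => ?_)
    (MeasureTheory.ae_of_all _ fun _ _ => Real.summable_pow_div_factorial |x|)
    intervalIntegrable_const
    (MeasureTheory.ae_of_all _ fun θ _ => (hasSum_im_exp_mul_exp_mul_I x θ).mul_right _)
  simpa [abs_div, abs_pow] using norm_mul_sin_mul_sin_le (x ^ k / k !) (k * θ) (n * θ)

theorem im_integral_exp_mul_exp_mul_I_mul_sin (x : ℝ) {n : ℕ} (hn : n ≠ 0) :
    (∫ θ in (0:ℝ)..π, exp (x * exp (θ * I)) * (Real.sin (n * θ) : ℂ)).im =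
      x ^ n / n ! * (π / 2) := by
  have hcont : Continuous fun θ : ℝ => exp (x * exp (θ * I)) * (Real.sin (n * θ) : ℂ) := by
    fun_prop
  rw [← imCLM_apply, ← imCLM.intervalIntegral_comp_comm (hcont.intervalIntegrable 0 π)]
  simp only [imCLM_apply, mul_im, ofReal_re, ofReal_im, mul_zero, zero_add]
  refine (hasSum_integral_im_exp_mul_exp_mul_I_mul_sin x n).unique ?_
  have hterm (k : ℕ) : ∫ θ in (0:ℝ)..π, x ^ k / k ! * Real.sin (k * θ) * Real.sin (n * θ) =
      if k = n then x ^ n / n ! * (π / 2) else 0 := by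
    simp_rw [mul_assoc]
    rw [intervalIntegral.integral_const_mul, integral_sin_nat_mul_mul_sin_nat_mul k hn]
    split_ifs with hkn <;> simp [hkn]
  simp_rw [hterm]
  exact hasSum_ite_eq n _

theorem im_integral_exp_j (j : ℕ) (n : ℕ) (hn : 1 ≤ n) :
    (∫ θ in (0:ℝ)..π,
        Complex.exp ((j : ℂ) * Complex.exp (θ * Complex.I)) * (Real.sin (n * θ) : ℂ)).im =
      (j : ℝ) ^ n / Nat.factorial n * (π / 2) := by
  exact_mod_cast im_integral_exp_mul_exp_mul_I_mul_sin j (by omega : n ≠ 0)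
end

section
/- For every natural number n ≥ 1, the Bell number Bₙ satisfies Bₙ = (2·n!)/(π·e) · Im(∫₀^π exp(exp(e^{iθ})) · sin(nθ) dθ). -/
open Real MeasureTheory intervalIntegral

/-- Stirling numbers of the second kind. -/
def stirling : ℕ → ℕ → ℕ
  | 0, 0 => 1
  | 0, _ + 1 => 0
  | _ + 1, 0 => 0
  | n + 1, k + 1 => (k + 1) * stirling n (k + 1) + stirling n k

/-- Bell numbers, via the standard recurrence. -/
def bell : ℕ → ℕ
  | 0 => 1
  | n + 1 => ∑ k ∈ (Finset.range (n + 1)).attach, Nat.choose n k.1 * bell k.1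
decreasing_by exact Finset.mem_range.mp k.2



lemma pow_succ_fact_expand (n j : ℕ) : ((j + 1 : ℕ) : ℝ) ^ (n + 1) / (j + 1).factorial
    = ∑ k ∈ Finset.range (n + 1), (n.choose k : ℝ) * ((j : ℝ) ^ k / j.factorial) := by
  have h1 : ((j + 1 : ℕ) : ℝ) ^ (n + 1) / (j + 1).factorial
      = ((j : ℝ) + 1) ^ n / j.factorial := by
    rw [Nat.factorial_succ]
    push_cast
    have hj : (j:ℝ) + 1 ≠ 0 := by positivity
    have hf : ((j.factorial : ℝ)) ≠ 0 := by positivity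
    field_simp
    ring
  rw [h1, add_pow]
  rw [Finset.sum_div]
  refine Finset.sum_congr rfl fun k hk => ?_
  ring

lemma summable_pow_div_fact : ∀ n : ℕ, Summable fun m : ℕ => (m : ℝ) ^ n / m.factorial := by
  intro n
  induction n using Nat.strong_induction_on with
  | _ n ih =>
    match n with
    | 0 =>
      simpa using Real.summable_pow_div_factorial 1
    | n + 1 =>
      rw [← summable_nat_add_iff 1]
      have key := pow_succ_fact_expand n
      simp_rw [key]
      exact summable_sum fun k hk =>
        ((ih k (Finset.mem_range.mp hk)).mul_left _)

lemma dobinski : ∀ n : ℕ, ∑' m : ℕ, (m : ℝ) ^ n / m.factorial = Real.exp 1 * bell n := by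
  intro n
  induction n using Nat.strong_induction_on with
  | _ n ih =>
    match n with
    | 0 =>
      have he : Real.exp 1 = ∑' m : ℕ, (1:ℝ)^m / m.factorial := by
        rw [Real.exp_eq_exp_ℝ, NormedSpace.exp_eq_tsum_div]
      simp only [bell, Nat.cast_one, mul_one, pow_zero]
      rw [he]
      simp
    | n + 1 =>
      rw [Summable.tsum_eq_zero_add (summable_pow_div_fact (n+1))]
      have hsum : ∀ k ∈ Finset.range (n+1),
          Summable fun j : ℕ => (n.choose k : ℝ) * ((j : ℝ) ^ k / j.factorial) :=
        fun k _ => (summable_pow_div_fact k).mul_left _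
      calc ((0:ℕ):ℝ)^(n+1) / (0:ℕ).factorial + ∑' j : ℕ, ((j+1:ℕ):ℝ)^(n+1)/(j+1).factorial
          = ∑' j : ℕ, ∑ k ∈ Finset.range (n+1),
              (n.choose k : ℝ) * ((j : ℝ) ^ k / j.factorial) := by
            simp only [pow_succ_fact_expand]
            simp
        _ = ∑ k ∈ Finset.range (n+1), ∑' j : ℕ,
              (n.choose k : ℝ) * ((j : ℝ) ^ k / j.factorial) := Summable.tsum_finsetSum hsum
        _ = ∑ k ∈ Finset.range (n+1), (n.choose k : ℝ) * (Real.exp 1 * bell k) := by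
            refine Finset.sum_congr rfl fun k hk => ?_
            rw [tsum_mul_left, ih k (Finset.mem_range.mp hk)]
        _ = Real.exp 1 * bell (n+1) := by
            rw [show bell (n+1) = ∑ k ∈ (Finset.range (n + 1)).attach,
                  Nat.choose n k.1 * bell k.1 by rw [bell]]
            rw [Finset.sum_attach (Finset.range (n+1)) (fun k => Nat.choose n k * bell k)]
            push_cast [Finset.mul_sum]
            refine Finset.sum_congr rfl fun k hk => ?_
            ring

lemma sin_mul_sin' (x y : ℝ) : Real.sin x * Real.sin y = (Real.cos (x - y) - Real.cos (x + y)) / 2 := by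
  rw [Real.cos_sub, Real.cos_add]; ring

lemma integral_cos_mul {c : ℝ} (hc : c ≠ 0) :
    ∫ θ in (0:ℝ)..π, Real.cos (c * θ) = Real.sin (c * π) / c := by
  rw [integral_comp_mul_left Real.cos hc]
  rw [integral_cos]
  simp [smul_eq_mul]
  ring

lemma orth (k n : ℕ) (hn : 1 ≤ n) :
    ∫ θ in (0:ℝ)..π, Real.sin (k * θ) * Real.sin (n * θ) = if k = n then π / 2 else 0 := by
  by_cases h : k = n
  · subst h
    rw [if_pos rfl]
    have hk : (k : ℝ) ≠ 0 := by
      exact_mod_cast Nat.cast_ne_zero.mpr (by omega)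
    have : Set.EqOn (fun θ => Real.sin (k*θ) * Real.sin (k*θ))
        (fun θ => Real.sin (k*θ)^2) (Set.uIcc 0 π) := fun θ _ => (sq _).symm
    rw [intervalIntegral.integral_congr this]
    rw [integral_comp_mul_left (fun x => Real.sin x ^ 2) hk]
    rw [integral_sin_sq]
    rw [mul_zero]
    rw [Real.sin_nat_mul_pi]
    simp only [smul_eq_mul, Real.sin_zero, Real.cos_zero, mul_zero, zero_mul, sub_zero,
      zero_sub, neg_zero, zero_add, zero_div, mul_one]
    field_simp
  · rw [if_neg h]
    have hint : Set.EqOn (fun θ => Real.sin (k*θ) * Real.sin (n*θ))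
        (fun θ => (Real.cos (((k:ℝ)-n)*θ) - Real.cos (((k:ℝ)+n)*θ))/2) (Set.uIcc 0 π) := by
      intro θ _
      simp only [sin_mul_sin']
      ring_nf
    rw [intervalIntegral.integral_congr hint]
    have i1 : IntervalIntegrable (fun θ => Real.cos (((k:ℝ)-n)*θ)) volume 0 π :=
      (Real.continuous_cos.comp (continuous_const.mul continuous_id)).intervalIntegrable _ _
    have i2 : IntervalIntegrable (fun θ => Real.cos (((k:ℝ)+n)*θ)) volume 0 π :=
      (Real.continuous_cos.comp (continuous_const.mul continuous_id)).intervalIntegrable _ _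
    rw [intervalIntegral.integral_div, intervalIntegral.integral_sub i1 i2]
    have hc1 : (k:ℝ) - n ≠ 0 := by
      intro hcon
      exact h (by exact_mod_cast sub_eq_zero.mp hcon)
    have hc2 : (k:ℝ) + n ≠ 0 := by positivity
    rw [integral_cos_mul hc1, integral_cos_mul hc2]
    have s1 : Real.sin (((k:ℝ)-n)*π) = 0 := by
      have := Real.sin_int_mul_pi ((k:ℤ) - n)
      push_cast at this
      exact this
    have s2 : Real.sin (((k:ℝ)+n)*π) = 0 := by
      have := Real.sin_int_mul_pi ((k:ℤ) + n)
      push_cast at this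
      exact this
    rw [s1, s2]
    simp

noncomputable def cc (p : ℕ × ℕ) : ℝ := (p.1:ℝ)^p.2 / (p.1.factorial * p.2.factorial)

lemma cc_nonneg (p : ℕ × ℕ) : 0 ≤ cc p := by
  unfold cc; positivity

lemma summable_cc_inner (m : ℕ) : Summable fun k => cc (m, k) := by
  have : (fun k => cc (m, k)) = fun k => (1 / m.factorial : ℝ) * ((m:ℝ)^k / k.factorial) := by
    funext k; unfold cc; simp; ring
  rw [this]
  exact (Real.summable_pow_div_factorial m).mul_left _

lemma tsum_cc_inner (m : ℕ) : ∑' k, cc (m, k) = Real.exp 1 ^ m / m.factorial := by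
  have : (fun k => cc (m, k)) = fun k => (1 / m.factorial : ℝ) * ((m:ℝ)^k / k.factorial) := by
    funext k; unfold cc; simp; ring
  rw [this, tsum_mul_left]
  have he : ∑' k : ℕ, (m:ℝ)^k / k.factorial = Real.exp m := by
    rw [Real.exp_eq_exp_ℝ, NormedSpace.exp_eq_tsum_div]
  rw [he]
  rw [show Real.exp (m:ℝ) = Real.exp 1 ^ m by rw [← Real.exp_nat_mul]; norm_num]
  ring

lemma summable_cc : Summable cc := by
  rw [summable_prod_of_nonneg cc_nonneg]
  constructor
  · exact fun m => summable_cc_inner m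
  · have : (fun m => ∑' k, cc (m, k)) = fun m => Real.exp 1 ^ m / m.factorial := by
      funext m; exact tsum_cc_inner m
    rw [this]
    exact Real.summable_pow_div_factorial _

open Complex in
noncomputable def FF (n : ℕ) (p : ℕ × ℕ) (θ : ℝ) : ℂ :=
  (cc p : ℂ) * Complex.exp (((p.2 * θ : ℝ) : ℂ) * Complex.I) * ((Real.sin (n * θ) : ℝ) : ℂ)

lemma norm_FF (n : ℕ) (p : ℕ × ℕ) (θ : ℝ) : ‖FF n p θ‖ ≤ cc p := by
  unfold FF
  rw [norm_mul, norm_mul]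
  rw [Complex.norm_exp_ofReal_mul_I]
  rw [Complex.norm_real, Complex.norm_real, Real.norm_eq_abs, Real.norm_eq_abs]
  rw [abs_of_nonneg (cc_nonneg p)]
  calc cc p * 1 * |Real.sin (n * θ)| ≤ cc p * 1 * 1 := by
        have := Real.abs_sin_le_one (n * θ)
        have h0 := cc_nonneg p
        nlinarith
    _ = cc p := by ring

lemma summable_FF (n : ℕ) (θ : ℝ) : Summable fun p => FF n p θ :=
  Summable.of_norm (summable_cc.of_nonneg_of_le (fun _ => norm_nonneg _) (fun p => norm_FF n p θ))

lemma expand_exp (n : ℕ) (θ : ℝ) :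
    Complex.exp (Complex.exp (Complex.exp (θ * Complex.I))) * ((Real.sin (n * θ) : ℝ) : ℂ)
      = ∑' p : ℕ × ℕ, FF n p θ := by
  rw [Summable.tsum_prod' (summable_FF n θ) (fun m => (summable_FF n θ).prod_factor m)]
  set w : ℂ := Complex.exp (θ * Complex.I) with hw
  set s : ℂ := ((Real.sin (n * θ) : ℝ) : ℂ) with hs
  have h1 : Complex.exp (Complex.exp w) = ∑' m : ℕ, (Complex.exp w) ^ m / m.factorial := by
    rw [Complex.exp_eq_exp_ℂ, NormedSpace.exp_eq_tsum_div]
  rw [h1, ← tsum_mul_right]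
  refine tsum_congr fun m => ?_
  have h2 : (Complex.exp w) ^ m = Complex.exp ((m : ℂ) * w) := (Complex.exp_nat_mul w m).symm
  have h3 : Complex.exp ((m : ℂ) * w) = ∑' k : ℕ, ((m : ℂ) * w) ^ k / k.factorial := by
    rw [Complex.exp_eq_exp_ℂ, NormedSpace.exp_eq_tsum_div]
  rw [h2, h3, ← tsum_div_const, ← tsum_mul_right]
  refine tsum_congr fun k => ?_
  have h4 : w ^ k = Complex.exp (((k * θ : ℝ) : ℂ) * Complex.I) := by
    rw [hw, ← Complex.exp_nat_mul]
    push_cast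
    ring_nf
  unfold FF cc
  rw [mul_pow, h4]
  have hcast : ((((m:ℝ)^k / (m.factorial * k.factorial) : ℝ)) : ℂ)
      = (m:ℂ)^k / ((m.factorial : ℂ) * (k.factorial : ℂ)) := by push_cast; ring
  rw [hcast]
  ring

lemma FF_im (n : ℕ) (p : ℕ × ℕ) (θ : ℝ) :
    (FF n p θ).im = cc p * (Real.sin (p.2 * θ) * Real.sin (n * θ)) := by
  unfold FF
  rw [Complex.exp_mul_I]
  have h1 : Complex.cos ((p.2 * θ : ℝ) : ℂ) = ((Real.cos (p.2 * θ) : ℝ) : ℂ) :=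
    (Complex.ofReal_cos _).symm
  have h2 : Complex.sin ((p.2 * θ : ℝ) : ℂ) = ((Real.sin (p.2 * θ) : ℝ) : ℂ) :=
    (Complex.ofReal_sin _).symm
  rw [h1, h2]
  have key : (cc p : ℂ) * (((Real.cos (p.2*θ) : ℝ):ℂ) + ((Real.sin (p.2*θ) : ℝ):ℂ) * Complex.I)
        * ((Real.sin (n*θ) : ℝ):ℂ)
      = ((cc p * Real.cos (p.2*θ) * Real.sin (n*θ) : ℝ) : ℂ)
        + ((cc p * (Real.sin (p.2*θ) * Real.sin (n*θ)) : ℝ) : ℂ) * Complex.I := by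
    push_cast; ring
  rw [key]
  simp only [Complex.add_im, Complex.mul_im, Complex.I_re, Complex.I_im, Complex.ofReal_re,
    Complex.ofReal_im]
  ring

theorem cesaro_formula (n : ℕ) (hn : 1 ≤ n) :
    (bell n : ℝ) =
      2 * Nat.factorial n / (π * Real.exp 1) *
        (∫ θ in (0:ℝ)..π,
            Complex.exp (Complex.exp (Complex.exp (θ * Complex.I))) *
              (Real.sin (n * θ) : ℂ)).im := by
  set μ : Measure ℝ := volume.restrict (Set.Ioc 0 π) with hμ
  have hcont : ∀ p : ℕ × ℕ, Continuous (fun θ => FF n p θ) := by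
    intro p; unfold FF; fun_prop
  have hint : ∀ p : ℕ × ℕ, Integrable (fun θ => FF n p θ) μ := fun p =>
    (hcont p).integrableOn_Ioc
  have hμuniv : (μ Set.univ).toReal = π := by
    rw [hμ, Measure.restrict_apply_univ, Real.volume_Ioc, sub_zero,
      ENNReal.toReal_ofReal Real.pi_pos.le]
  have hbound : ∀ p, ∫ θ, ‖FF n p θ‖ ∂μ ≤ π * cc p := by
    intro p
    calc ∫ θ, ‖FF n p θ‖ ∂μ ≤ ∫ _θ, cc p ∂μ :=
          integral_mono (hint p).norm (integrable_const _) (fun θ => norm_FF n p θ)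
      _ = π * cc p := by rw [MeasureTheory.integral_const, measureReal_def, hμuniv, smul_eq_mul]
  have hFsum : Summable fun p => ∫ θ, ‖FF n p θ‖ ∂μ :=
    Summable.of_nonneg_of_le (fun p => integral_nonneg fun θ => norm_nonneg _)
      hbound (summable_cc.mul_left π)
  have hHS : HasSum (fun p => ∫ θ, FF n p θ ∂μ) (∫ θ, (∑' p, FF n p θ) ∂μ) :=
    MeasureTheory.hasSum_integral_of_summable_integral_norm hint hFsum
  have hmain : (∫ θ in (0:ℝ)..π,
      Complex.exp (Complex.exp (Complex.exp (θ * Complex.I))) * (Real.sin (n * θ) : ℂ))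
      = ∫ θ, (∑' p, FF n p θ) ∂μ := by
    rw [intervalIntegral.integral_of_le Real.pi_pos.le]
    exact integral_congr_ae (Filter.Eventually.of_forall fun θ => expand_exp n θ)
  -- value of each imaginary part
  have hval : ∀ p : ℕ × ℕ, (∫ θ, FF n p θ ∂μ).im = if p.2 = n then cc p * (π / 2) else 0 := by
    intro p
    have him : (∫ θ, FF n p θ ∂μ).im = ∫ θ, (FF n p θ).im ∂μ := by
      have := Complex.imCLM.integral_comp_comm (hint p)
      simpa using this.symm
    rw [him]
    have : ∫ θ, (FF n p θ).im ∂μ = ∫ θ in (0:ℝ)..π, (FF n p θ).im := by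
      rw [intervalIntegral.integral_of_le Real.pi_pos.le]
    rw [this]
    have : ∫ θ in (0:ℝ)..π, (FF n p θ).im
        = ∫ θ in (0:ℝ)..π, cc p * (Real.sin (p.2 * θ) * Real.sin (n * θ)) := by
      refine intervalIntegral.integral_congr fun θ _ => ?_
      exact FF_im n p θ
    rw [this, intervalIntegral.integral_const_mul, orth p.2 n hn]
    by_cases h : p.2 = n
    · rw [if_pos h, if_pos h]
    · rw [if_neg h, if_neg h, mul_zero]
  -- summability / tsum computation of the imaginary parts
  set f : ℕ × ℕ → ℝ := fun p => if p.2 = n then cc p * (π / 2) else 0 with hf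
  have hf_nonneg : ∀ p, 0 ≤ f p := by
    intro p; rw [hf]; dsimp only
    split
    · exact mul_nonneg (cc_nonneg p) (by positivity)
    · exact le_rfl
  have hf_le : ∀ p, f p ≤ cc p * (π / 2) := by
    intro p; rw [hf]; dsimp only
    split
    · exact le_rfl
    · exact mul_nonneg (cc_nonneg p) (by positivity)
  have hf_summable : Summable f :=
    Summable.of_nonneg_of_le hf_nonneg hf_le (summable_cc.mul_right _)
  have htsum_f : ∑' p, f p = π / 2 * (1 / (n.factorial : ℝ)) * (Real.exp 1 * bell n) := by
    rw [Summable.tsum_prod' hf_summable (fun m => hf_summable.prod_factor m)]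
    have hinner : ∀ m : ℕ, ∑' k, f (m, k) = cc (m, n) * (π / 2) := by
      intro m
      refine (tsum_eq_single n (fun k hk => ?_)).trans ?_
      · rw [hf]; exact if_neg hk
      · rw [hf]; exact if_pos rfl
    calc ∑' m, ∑' k, f (m, k) = ∑' m : ℕ, cc (m, n) * (π / 2) := tsum_congr hinner
      _ = ∑' m : ℕ, (π / 2 * (1 / (n.factorial : ℝ))) * ((m : ℝ) ^ n / m.factorial) := by
          refine tsum_congr fun m => ?_
          unfold cc
          have h1 : ((m.factorial * n.factorial : ℕ) : ℝ) ≠ 0 := by positivity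
          field_simp
      _ = (π / 2 * (1 / (n.factorial : ℝ))) * ∑' m : ℕ, (m : ℝ) ^ n / m.factorial :=
          tsum_mul_left
      _ = π / 2 * (1 / (n.factorial : ℝ)) * (Real.exp 1 * bell n) := by
          rw [dobinski n]
  have him_total : (∫ θ in (0:ℝ)..π,
      Complex.exp (Complex.exp (Complex.exp (θ * Complex.I))) * (Real.sin (n * θ) : ℂ)).im
      = ∑' p, f p := by
    rw [hmain, ← hHS.tsum_eq]
    calc (∑' p, ∫ θ, FF n p θ ∂μ).im = ∑' p, (∫ θ, FF n p θ ∂μ).im := by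
          simpa using Complex.imCLM.map_tsum hHS.summable
      _ = ∑' p, f p := tsum_congr hval
  rw [him_total, htsum_f]
  have hπ : π ≠ 0 := Real.pi_ne_zero
  have he : Real.exp 1 ≠ 0 := Real.exp_ne_zero 1
  have hfac : ((n.factorial : ℕ) : ℝ) ≠ 0 := by positivity
  field_simp
end

section
/- For every natural number n ≥ 1 and real t, Im(∫₀^π exp(t·e^{iθ})·sin(nθ) dθ) = (tⁿ/n!)·(π/2). -/
/-!
Expand `exp (t e^{iθ}) = ∑ₖ tᵏ e^{ikθ} / k!` and integrate termwise against `sin (nθ)`,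
which dominated convergence allows (majorant `|t|ᵏ / k!`). The imaginary part of the
`k`-th term is `tᵏ / k! · ∫₀^π sin (kθ) sin (nθ) dθ`, and by orthogonality of the sines
on `[0, π]` only `k = n` survives, contributing `tⁿ / n! · π / 2`.
-/

open Real Complex intervalIntegral Nat

theorem integral_cos_int_mul_zero_pi (m : ℤ) :
    ∫ θ in (0:ℝ)..π, Real.cos (m * θ) = if m = 0 then π else 0 := by
  split_ifs with hm
  · simp [hm]
  · have hm' : (m : ℝ) ≠ 0 := Int.cast_ne_zero.mpr hm
    simp [integral_comp_mul_left (fun x => Real.cos x) hm', Real.sin_int_mul_pi]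

theorem integral_sin_nat_mul_mul_sin_nat_mul_zero_pi (k : ℕ) {n : ℕ} (hn : n ≠ 0) :
    ∫ θ in (0:ℝ)..π, Real.sin (k * θ) * Real.sin (n * θ) = if k = n then π / 2 else 0 := by
  have product_to_sum : ∀ θ : ℝ, Real.sin (k * θ) * Real.sin (n * θ) =
      (Real.cos (((k - n : ℤ) : ℝ) * θ) - Real.cos (((k + n : ℤ) : ℝ) * θ)) / 2 := by
    intro θ
    push_cast
    rw [sub_mul, add_mul, Real.cos_sub, Real.cos_add]
    ring
  simp_rw [product_to_sum]
  rw [intervalIntegral.integral_div,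
    integral_sub ((by fun_prop : Continuous _).intervalIntegrable _ _)
      ((by fun_prop : Continuous _).intervalIntegrable _ _),
    integral_cos_int_mul_zero_pi, integral_cos_int_mul_zero_pi]
  split_ifs <;> first | omega | ring

theorem hasSum_intervalIntegral_pow_div_factorial_mul {f g : ℝ → ℂ} (hf : Continuous f)
    (hg : Continuous g) (a b : ℝ) :
    HasSum (fun k : ℕ => ∫ θ in a..b, f θ ^ k / k ! * g θ)
      (∫ θ in a..b, cexp (f θ) * g θ) := by
  have bound_hasSum : ∀ θ, HasSum (fun k : ℕ => ‖f θ‖ ^ k / k ! * ‖g θ‖)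
      (Real.exp ‖f θ‖ * ‖g θ‖) := fun θ => by
    rw [Real.exp_eq_exp_ℝ]
    exact (NormedSpace.expSeries_div_hasSum_exp ‖f θ‖).mul_right _
  refine hasSum_integral_of_dominated_convergence (fun k θ => ‖f θ‖ ^ k / k ! * ‖g θ‖)
    (fun k => by fun_prop) (fun k => .of_forall fun θ _ => ?bound)
    (.of_forall fun θ _ => (bound_hasSum θ).summable) ?bound_integrable
    (.of_forall fun θ _ => ?lim)
  case bound => simp [norm_pow]
  case bound_integrable =>
    simp_rw [fun θ => (bound_hasSum θ).tsum_eq]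
    exact (by fun_prop : Continuous _).intervalIntegrable _ _
  case lim =>
    rw [Complex.exp_eq_exp_ℂ]
    exact (NormedSpace.expSeries_div_hasSum_exp (f θ)).mul_right _

theorem im_pow_exp_mul_I_div_factorial_mul_ofReal (t θ : ℝ) (k : ℕ) (x : ℝ) :
    ((t * cexp (θ * I)) ^ k / k ! * (x : ℂ)).im = t ^ k / k ! * (Real.sin (k * θ) * x) := by
  have polar : (t * cexp (θ * I)) ^ k / k ! * (x : ℂ) =
      ((t ^ k / k ! * x : ℝ) : ℂ) * cexp ((k * θ : ℝ) * I) := by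
    rw [mul_pow, ← Complex.exp_nat_mul]
    push_cast
    ring_nf
  rw [polar, Complex.im_ofReal_mul, Complex.exp_ofReal_mul_I_im]
  ring

theorem im_intervalIntegral_pow_exp_mul_I_div_factorial_mul (t : ℝ) (k : ℕ) {g : ℝ → ℝ}
    (hg : Continuous g) (a b : ℝ) :
    (∫ θ in a..b, (t * cexp (θ * I)) ^ k / k ! * (g θ : ℂ)).im =
      t ^ k / k ! * ∫ θ in a..b, Real.sin (k * θ) * g θ := by
  have integrand_continuous :
      Continuous fun θ : ℝ => (t * cexp (θ * I)) ^ k / k ! * (g θ : ℂ) := by fun_prop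
  have im_comm := Complex.imCLM.intervalIntegral_comp_comm (μ := MeasureTheory.volume)
    (integrand_continuous.intervalIntegrable a b)
  simp only [Complex.imCLM_apply, im_pow_exp_mul_I_div_factorial_mul_ofReal] at im_comm
  rw [← im_comm, intervalIntegral.integral_const_mul]

theorem im_integral_exp_real (n : ℕ) (hn : 1 ≤ n) (t : ℝ) :
    (∫ θ in (0:ℝ)..π,
        Complex.exp ((t : ℂ) * Complex.exp (θ * Complex.I)) * (Real.sin (n * θ) : ℂ)).im =
      t ^ n / Nat.factorial n * (π / 2) := by
  have sin_continuous : Continuous fun θ : ℝ => Real.sin (n * θ) := by fun_prop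
  have series := Complex.hasSum_im <| hasSum_intervalIntegral_pow_div_factorial_mul
    (f := fun θ => t * cexp (θ * I)) (g := fun θ => (Real.sin (n * θ) : ℂ))
    (by fun_prop) (by fun_prop) 0 π
  simp only [im_intervalIntegral_pow_exp_mul_I_div_factorial_mul t _ sin_continuous,
    integral_sin_nat_mul_mul_sin_nat_mul_zero_pi _ (Nat.one_le_iff_ne_zero.mp hn)] at series
  rw [series.unique (hasSum_single n fun k hk => by simp [hk])]
  simp
end
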